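/- arXiv:cs/0604093 — 3 statements merged into one kernel-verified Lean document; each statement's English description precedes it below -/
import Mathlib

section
/- For a prime p ≡ 5 (mod 8), there is no x in the field K = Q(i, √p) such that the relative norm N_{K/Q(i)}(x) equals i. Equivalently, the equation a² - p·b² = i has no solution with a, b ∈ Q(i). -/
lemma no_sqrt_i (p : ℕ) (hp : p.Prime) (h5 : p % 8 = 5) (s : ZMod p)
    (hs : s ^ 4 = -1) : False := by
  haveI : Fact p.Prime := ⟨hp⟩
  have hne : (-1 : ZMod p) ≠ 0 := neg_ne_zero.mpr one_ne_zero
  have hs0 : s ≠ 0 := by intro h; apply hne; rw [← hs, h]; ring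
  have h1 : s ^ (p - 1) = 1 := ZMod.pow_card_sub_one_eq_one hs0
  have hk : p - 1 = 8 * (p / 8) + 4 := by omega
  have h8 : s ^ 8 = 1 := by
    have h : s ^ 8 = (s ^ 4) ^ 2 := by ring
    rw [h, hs]; ring
  have hm : s ^ (p - 1) = -1 := by
    rw [hk, pow_add, pow_mul, h8, one_pow, hs, one_mul]
  have h2 : ((2 : ℕ) : ZMod p) = 0 := by
    push_cast; linear_combination h1.symm.trans hm
  have := Nat.le_of_dvd (by norm_num) ((ZMod.natCast_eq_zero_iff 2 p).mp h2)
  omega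

lemma descent (p : ℕ) (hp : p.Prime) (h5 : p % 8 = 5) :
    ∀ n : ℕ, ∀ d A₁ A₂ B₁ B₂ : ℤ, d.natAbs = n → d ≠ 0 →
      A₁ ^ 2 - A₂ ^ 2 = p * (B₁ ^ 2 - B₂ ^ 2) →
      2 * A₁ * A₂ - 2 * p * B₁ * B₂ = d ^ 2 → False := by
  haveI : Fact p.Prime := ⟨hp⟩
  have hp0 : (p : ℤ) ≠ 0 := by exact_mod_cast hp.ne_zero
  have hpZ : Prime (p : ℤ) := Nat.prime_iff_prime_int.mp hp
  intro n
  induction n using Nat.strong_induction_on with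
  | _ n IH =>
  intro d A₁ A₂ B₁ B₂ hdn hd0 e1 e2
  obtain ⟨c, hc⟩ : IsSquare (-1 : ZMod p) :=
    (ZMod.exists_sq_eq_neg_one_iff).mpr (by omega)
  have hc2 : c ^ 2 = -1 := by rw [pow_two]; exact hc.symm
  have E1 : (A₁ : ZMod p) ^ 2 - (A₂ : ZMod p) ^ 2 = 0 := by
    have := congrArg (Int.cast : ℤ → ZMod p) e1
    push_cast at this
    rw [ZMod.natCast_self] at this
    linear_combination this
  have E2 : 2 * (A₁ : ZMod p) * (A₂ : ZMod p) = (d : ZMod p) ^ 2 := by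
    have := congrArg (Int.cast : ℤ → ZMod p) e2
    push_cast at this
    rw [ZMod.natCast_self] at this
    linear_combination this
  have key : ((A₁ : ZMod p) + c * (A₂ : ZMod p)) ^ 2 = c * (d : ZMod p) ^ 2 := by
    linear_combination E1 + c * E2 + (A₂ : ZMod p) ^ 2 * hc2
  by_cases hdp : (d : ZMod p) = 0
  · -- descent case
    have hx : (A₁ : ZMod p) + c * (A₂ : ZMod p) = 0 := by
      have h := key
      rw [hdp] at h
      simpa using pow_eq_zero_iff (two_ne_zero) |>.mp (by simpa using h)
    have h2ne : (2 : ZMod p) ≠ 0 := by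
      intro h
      have := Nat.le_of_dvd (by norm_num)
        ((ZMod.natCast_eq_zero_iff 2 p).mp (by exact_mod_cast h))
      omega
    have hA2 : (A₂ : ZMod p) = 0 := by
      have h22 : (2 : ZMod p) * (A₂ : ZMod p) ^ 2 = 0 := by
        linear_combination (-(1 : ZMod p)) * E1
          + ((A₁ : ZMod p) - c * (A₂ : ZMod p)) * hx + (A₂ : ZMod p) ^ 2 * hc2
      have := (mul_eq_zero.mp h22).resolve_left h2ne
      exact pow_eq_zero_iff two_ne_zero |>.mp this
    have hA1 : (A₁ : ZMod p) = 0 := by linear_combination hx - c * hA2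
    have dA1 : (p : ℤ) ∣ A₁ := (ZMod.intCast_zmod_eq_zero_iff_dvd _ p).mp hA1
    have dA2 : (p : ℤ) ∣ A₂ := (ZMod.intCast_zmod_eq_zero_iff_dvd _ p).mp hA2
    have dd : (p : ℤ) ∣ d := (ZMod.intCast_zmod_eq_zero_iff_dvd _ p).mp hdp
    obtain ⟨a₁, rfl⟩ := dA1
    obtain ⟨a₂, rfl⟩ := dA2
    obtain ⟨d', rfl⟩ := dd
    have hBB : (p : ℤ) ∣ 2 * (B₁ * B₂) :=
      ⟨2 * a₁ * a₂ - d' ^ 2, mul_left_cancel₀ hp0 (by linear_combination -e2)⟩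
    have hBd : (p : ℤ) ∣ B₁ ^ 2 - B₂ ^ 2 :=
      ⟨a₁ ^ 2 - a₂ ^ 2, mul_left_cancel₀ hp0 (by linear_combination -e1)⟩
    have hp2 : ¬ (p : ℤ) ∣ 2 := by
      intro h
      have h' : p ∣ 2 := by exact_mod_cast h
      have := Nat.le_of_dvd (by norm_num) h'
      omega
    have hB12 : (p : ℤ) ∣ B₁ * B₂ := (hpZ.dvd_mul.mp hBB).resolve_left hp2
    have hB : (p : ℤ) ∣ B₁ ∧ (p : ℤ) ∣ B₂ := by
      rcases hpZ.dvd_mul.mp hB12 with h | h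
      · refine ⟨h, hpZ.dvd_of_dvd_pow (n := 2) ?_⟩
        have hh : B₂ ^ 2 = B₁ ^ 2 - (B₁ ^ 2 - B₂ ^ 2) := by ring
        rw [hh]
        exact dvd_sub (Dvd.dvd.pow h two_ne_zero) hBd
      · refine ⟨hpZ.dvd_of_dvd_pow (n := 2) ?_, h⟩
        have hh : B₁ ^ 2 = B₂ ^ 2 + (B₁ ^ 2 - B₂ ^ 2) := by ring
        rw [hh]
        exact dvd_add (Dvd.dvd.pow h two_ne_zero) hBd
    obtain ⟨b₁, rfl⟩ := hB.1
    obtain ⟨b₂, rfl⟩ := hB.2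
    have hd'0 : d' ≠ 0 := by
      rintro rfl
      simp at hd0
    have ne1 : a₁ ^ 2 - a₂ ^ 2 = p * (b₁ ^ 2 - b₂ ^ 2) := by
      refine mul_left_cancel₀ (pow_ne_zero 2 hp0) ?_
      linear_combination e1
    have ne2 : 2 * a₁ * a₂ - 2 * p * b₁ * b₂ = d' ^ 2 := by
      refine mul_left_cancel₀ (pow_ne_zero 2 hp0) ?_
      linear_combination e2
    refine IH d'.natAbs ?_ d' a₁ a₂ b₁ b₂ rfl hd'0 ne1 ne2
    rw [← hdn, Int.natAbs_mul]
    have h1 : 1 ≤ d'.natAbs := Int.natAbs_pos.mpr hd'0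
    have h2 : 2 ≤ (p : ℤ).natAbs := by simpa using hp.two_le
    nlinarith
  · -- c is a square: contradiction
    have hs2 : (((A₁ : ZMod p) + c * (A₂ : ZMod p)) * (d : ZMod p)⁻¹) ^ 2 = c := by
      have hd1 : (d : ZMod p) * (d : ZMod p)⁻¹ = 1 := mul_inv_cancel₀ hdp
      calc (((A₁ : ZMod p) + c * (A₂ : ZMod p)) * (d : ZMod p)⁻¹) ^ 2
          = ((A₁ : ZMod p) + c * (A₂ : ZMod p)) ^ 2 * ((d : ZMod p)⁻¹) ^ 2 := by ring
        _ = c * ((d : ZMod p) * (d : ZMod p)⁻¹) ^ 2 := by rw [key]; ring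
        _ = c := by rw [hd1]; ring
    refine no_sqrt_i p hp h5 (((A₁ : ZMod p) + c * (A₂ : ZMod p)) * (d : ZMod p)⁻¹) ?_
    calc (((A₁ : ZMod p) + c * (A₂ : ZMod p)) * (d : ZMod p)⁻¹) ^ 4
        = ((((A₁ : ZMod p) + c * (A₂ : ZMod p)) * (d : ZMod p)⁻¹) ^ 2) ^ 2 := by ring
      _ = -1 := by rw [hs2, hc2]


theorem stmt_2 (p : ℕ) (hp : p.Prime) (h5 : p % 8 = 5) :
    ∀ a₁ a₂ b₁ b₂ : ℚ,
      ((a₁ : ℂ) + (a₂ : ℂ) * Complex.I) ^ 2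
        - (p : ℂ) * ((b₁ : ℂ) + (b₂ : ℂ) * Complex.I) ^ 2 ≠ Complex.I := by
  intro a₁ a₂ b₁ b₂ h
  rw [Complex.ext_iff] at h
  obtain ⟨h1, h2⟩ := h
  simp [pow_two, Complex.add_re, Complex.add_im, Complex.mul_re, Complex.mul_im] at h1 h2
  have eq1 : a₁ ^ 2 - a₂ ^ 2 - p * (b₁ ^ 2 - b₂ ^ 2) = 0 := by
    have h' : ((a₁ ^ 2 - a₂ ^ 2 - p * (b₁ ^ 2 - b₂ ^ 2) : ℚ) : ℝ) = 0 := by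
      push_cast; nlinarith [h1]
    exact_mod_cast h'
  have eq2 : 2 * a₁ * a₂ - 2 * p * b₁ * b₂ = 1 := by
    have h' : ((2 * a₁ * a₂ - 2 * p * b₁ * b₂ : ℚ) : ℝ) = 1 := by
      push_cast; nlinarith [h2]
    exact_mod_cast h'
  set D : ℤ := (a₁.den : ℤ) * a₂.den * b₁.den * b₂.den with hD
  set A₁ : ℤ := a₁.num * ((a₂.den : ℤ) * b₁.den * b₂.den) with hA₁
  set A₂ : ℤ := a₂.num * ((a₁.den : ℤ) * b₁.den * b₂.den) with hA₂
  set B₁ : ℤ := b₁.num * ((a₁.den : ℤ) * a₂.den * b₂.den) with hB₁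
  set B₂ : ℤ := b₂.num * ((a₁.den : ℤ) * a₂.den * b₁.den) with hB₂
  have cA₁ : ((A₁ : ℤ) : ℚ) = a₁ * D := by
    rw [hA₁, hD]; push_cast
    rw [← Rat.mul_den_eq_num a₁]; ring
  have cA₂ : ((A₂ : ℤ) : ℚ) = a₂ * D := by
    rw [hA₂, hD]; push_cast
    rw [← Rat.mul_den_eq_num a₂]; ring
  have cB₁ : ((B₁ : ℤ) : ℚ) = b₁ * D := by
    rw [hB₁, hD]; push_cast
    rw [← Rat.mul_den_eq_num b₁]; ring
  have cB₂ : ((B₂ : ℤ) : ℚ) = b₂ * D := by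
    rw [hB₂, hD]; push_cast
    rw [← Rat.mul_den_eq_num b₂]; ring
  have hD0 : D ≠ 0 := by
    rw [hD]
    positivity
  have ie1 : A₁ ^ 2 - A₂ ^ 2 = p * (B₁ ^ 2 - B₂ ^ 2) := by
    have h' : (A₁ : ℚ) ^ 2 - (A₂ : ℚ) ^ 2 = p * ((B₁ : ℚ) ^ 2 - (B₂ : ℚ) ^ 2) := by
      rw [cA₁, cA₂, cB₁, cB₂]
      linear_combination ((D : ℚ)) ^ 2 * eq1
    exact_mod_cast h'
  have ie2 : 2 * A₁ * A₂ - 2 * p * B₁ * B₂ = D ^ 2 := by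
    have h' : 2 * (A₁ : ℚ) * (A₂ : ℚ) - 2 * p * (B₁ : ℚ) * (B₂ : ℚ) = (D : ℚ) ^ 2 := by
      rw [cA₁, cA₂, cB₁, cB₂]
      linear_combination ((D : ℚ)) ^ 2 * eq2
    exact_mod_cast h'
  exact descent p hp h5 D.natAbs D A₁ A₂ B₁ B₂ rfl hD0 ie1 ie2
end

section
/- Let K/F be a cyclic extension of degree n with Galois group ⟨σ⟩ and γ ∈ F* such that the smallest positive integer t with γ^t ∈ N_{K/F}(K*) is t = n. Then the cyclic algebra A = (K/F, σ, γ) is a division algebra; in particular the matrix representation of every nonzero element of A has nonzero determinant. -/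
private lemma modAux13 {a n : ℕ} (h : a < 2 * n) : a % n = if a < n then a else a - n := by
  split_ifs with h1
  · exact Nat.mod_eq_of_lt h1
  · rw [Nat.mod_eq_sub_mod (le_of_not_gt h1), Nat.mod_eq_of_lt (by omega)]

private lemma valAddOne13 {n : ℕ} [NeZero n] (j : Fin n) :
    ((j + 1 : Fin n) : ℕ) = ((j : ℕ) + 1) % n := by
  rw [Fin.val_add, Fin.val_one']
  have : ((j : ℕ) + 1 % n) % n = ((j : ℕ) % n + 1 % n) % n := by
    rw [Nat.mod_eq_of_lt j.isLt]
  rw [this, ← Nat.add_mod]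

private lemma addOneEqZero13 {n : ℕ} [NeZero n] (l : Fin n) :
    (l + 1 = 0) ↔ ((l : ℕ) + 1 = n) := by
  rw [Fin.ext_iff, valAddOne13]
  simp only [Fin.val_zero]
  constructor
  · intro h
    have hlt := l.isLt
    by_contra hne
    rw [Nat.mod_eq_of_lt (by omega)] at h
    omega
  · intro h; rw [h, Nat.mod_self]

private lemma valSubOne13 {n : ℕ} [NeZero n] (k : Fin n) :
    ((k - 1 : Fin n) : ℕ) = if k = 0 then n - 1 else (k : ℕ) - 1 := by
  have h := valAddOne13 (k - 1)
  rw [sub_add_cancel] at h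
  have hlt := (k - 1).isLt
  have hk := k.isLt
  rcases Nat.lt_or_ge (((k - 1 : Fin n) : ℕ) + 1) n with hlt2 | hge
  · rw [Nat.mod_eq_of_lt hlt2] at h
    split_ifs with h0
    · subst h0; simp only [Fin.val_zero] at h; omega
    · have : (k : ℕ) ≠ 0 := fun hh => h0 (Fin.ext (by simp [hh]))
      omega
  · have he : ((k - 1 : Fin n) : ℕ) + 1 = n := by omega
    rw [he, Nat.mod_self] at h
    split_ifs with h0
    · omega
    · exfalso; exact h0 (Fin.ext (by simp [h]))

private def cycAux13 {K : Type*} [Field K] (n : ℕ) [NeZero n] (g : K) : Matrix (Fin n) (Fin n) K :=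
  Matrix.of fun k l => if k = l + 1 then (if k = 0 then g else 1) else 0

private lemma cycPowAux13 {K : Type*} [Field K] {n : ℕ} [NeZero n] (g : K) :
    ∀ m, m ≤ n → ∀ k l : Fin n, (cycAux13 n g ^ m) k l =
      if ((l : ℕ) + m) % n = (k : ℕ) then (if (k : ℕ) < m then g else 1) else 0 := by
  intro m
  induction m with
  | zero =>
    intro _ k l
    simp only [pow_zero, Matrix.one_apply, Nat.add_zero, Nat.mod_eq_of_lt l.isLt,
      Nat.not_lt_zero, if_false]
    by_cases h : k = l
    · subst h; simp
    · rw [if_neg h, if_neg (fun hh => h (Fin.ext hh.symm))]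
  | succ m ih =>
    intro hm k l
    rw [pow_succ, Matrix.mul_apply]
    rw [Finset.sum_eq_single (l + 1)]
    · rw [ih (by omega) k (l + 1)]
      have hc : cycAux13 n g (l + 1) l = if l + 1 = 0 then g else 1 := by
        simp [cycAux13]
      rw [hc, valAddOne13, Nat.mod_add_mod]
      have harith : (l : ℕ) + 1 + m = (l : ℕ) + (m + 1) := by omega
      rw [harith]
      by_cases hcond : ((l : ℕ) + (m + 1)) % n = (k : ℕ)
      · rw [if_pos hcond, if_pos hcond]
        by_cases hln : (l : ℕ) + 1 = n
        · have hk : (k : ℕ) = m := by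
            have he : (l : ℕ) + (m + 1) = n + m := by omega
            rw [he, Nat.add_mod_left, Nat.mod_eq_of_lt (by omega)] at hcond
            omega
          rw [if_pos (addOneEqZero13 l |>.mpr hln),
            if_neg (show ¬(k : ℕ) < m by omega), one_mul,
            if_pos (show (k : ℕ) < m + 1 by omega)]
        · rw [if_neg (fun h => hln ((addOneEqZero13 l).mp h)), mul_one]
          have hk : (k : ℕ) ≠ m := by
            intro hk
            have h2 := modAux13 (show (l : ℕ) + (m + 1) < 2 * n by have := l.isLt; omega)
            rw [h2] at hcond; have := l.isLt
            split_ifs at hcond <;> omega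
          exact if_congr (by omega) rfl rfl
      · rw [if_neg hcond, if_neg hcond, zero_mul]
    · intro b _ hb
      have : cycAux13 n g b l = 0 := by
        simp only [cycAux13, Matrix.of_apply]
        rw [if_neg hb]
      rw [this, mul_zero]
    · intro h; exact absurd (Finset.mem_univ _) h

private lemma cycPowN13 {K : Type*} [Field K] {n : ℕ} [NeZero n] (g : K) :
    cycAux13 n g ^ n = g • (1 : Matrix (Fin n) (Fin n) K) := by
  ext k l
  rw [cycPowAux13 g n le_rfl k l]
  rw [Nat.add_mod_right, Nat.mod_eq_of_lt l.isLt]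
  rw [Matrix.smul_apply, Matrix.one_apply, if_pos k.isLt]
  by_cases h : (l : ℕ) = (k : ℕ)
  · rw [if_pos h, if_pos (Fin.ext h.symm), smul_eq_mul, mul_one]
  · rw [if_neg h, if_neg (fun hh => h (congrArg Fin.val hh).symm), smul_eq_mul, mul_zero]

private def twProdAux13 {K : Type*} [Field K] {t : ℕ}
    (f : ℕ → Matrix (Fin t) (Fin t) K) : ℕ → Matrix (Fin t) (Fin t) K
  | 0 => 1
  | m + 1 => twProdAux13 f m * f m

open Matrix in
theorem stmt_13 (F K : Type*) [Field F] [Field K] [Algebra F K]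
    [IsGalois F K] [FiniteDimensional F K]
    (n : ℕ) (hn : 0 < n) (hrank : Module.finrank F K = n)
    (σ : K ≃ₐ[F] K) (hgen : ∀ τ : K ≃ₐ[F] K, τ ∈ Subgroup.zpowers σ)
    (γ : F) (hγ0 : γ ≠ 0)
    (hnorm : ∀ t : ℕ, 0 < t → t < n → ∀ z : K, z ≠ 0 → Algebra.norm F z ≠ γ ^ t)
    (x : Fin n → K) (hx : x ≠ 0)
    (M : Matrix (Fin n) (Fin n) K)
    (hM : ∀ k l : Fin n, M k l =
      (if (k : ℕ) < (l : ℕ) then algebraMap F K γ else 1) * (σ ^ (l : ℕ)) (x (k - l))) :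
    M.det ≠ 0 := by
  intro hdet
  haveI : NeZero n := ⟨hn.ne'⟩
  set γ' : K := algebraMap F K γ with hγ'def
  have hγ'0 : γ' ≠ 0 := fun h => hγ0 ((algebraMap F K).injective (by rw [map_zero]; exact h))
  have hcard : Fintype.card (K ≃ₐ[F] K) = n := by
    rw [← Nat.card_eq_fintype_card, IsGalois.card_aut_eq_finrank, hrank]
  have hσn : σ ^ n = 1 := by rw [← hcard]; exact pow_card_eq_one
  have hfix : ∀ (τ : K ≃ₐ[F] K), τ γ' = γ' := fun τ => τ.commutes γ
  set C : Matrix (Fin n) (Fin n) K := cycAux13 n γ' with hCdef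
  -- key commutation identity
  have hMC : M * C = C * M.map ⇑σ := by
    ext k l
    rw [Matrix.mul_apply, Matrix.mul_apply]
    rw [Finset.sum_eq_single (l + 1) (fun b _ hb => by
          simp only [hCdef, cycAux13, Matrix.of_apply]; rw [if_neg hb, mul_zero])
        (fun h => absurd (Finset.mem_univ _) h)]
    rw [Finset.sum_eq_single (k - 1) (fun b _ hb => by
          simp only [hCdef, cycAux13, Matrix.of_apply]
          rw [if_neg (fun hh => hb (by rw [hh, add_sub_cancel_right])), zero_mul])
        (fun h => absurd (Finset.mem_univ _) h)]
    simp only [hCdef, cycAux13, Matrix.of_apply, Matrix.map_apply]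
    rw [if_pos (sub_add_cancel k 1).symm]
    simp only [eq_self_iff_true, if_true]
    rw [hM k (l + 1), hM (k - 1) l, _root_.map_mul]
    have harg : (k - 1) - l = k - (l + 1) := by rw [sub_sub, add_comm]
    rw [harg]
    rw [apply_ite σ, _root_.map_one, hfix]
    have hσl : σ ((σ ^ (l : ℕ)) (x (k - (l + 1)))) = (σ ^ ((l : ℕ) + 1)) (x (k - (l + 1))) := by
      rw [pow_succ']; rfl
    rw [hσl]
    by_cases hln : (l : ℕ) + 1 = n
    · have h0 : (l + 1 : Fin n) = 0 := (addOneEqZero13 l).mpr hln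
      rw [h0]
      simp only [Fin.val_zero, Nat.not_lt_zero, if_false, pow_zero, sub_zero, if_pos rfl]
      rw [hln, hσn]
      simp only [AlgEquiv.one_apply, one_mul]
      rw [valSubOne13]
      by_cases hk : k = 0
      · rw [if_pos hk, if_pos hk, if_neg (show ¬ (n - 1 < (l : ℕ)) by
          have := l.isLt; omega), one_mul]
        exact mul_comm _ _
      · have hkv : (k : ℕ) ≠ 0 := fun h => hk (Fin.ext (by simp [h]))
        rw [if_neg hk, if_neg hk, if_pos (show (k : ℕ) - 1 < (l : ℕ) by
          have := k.isLt; omega), one_mul]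
        exact mul_comm _ _
    · have h1 : ((l + 1 : Fin n) : ℕ) = (l : ℕ) + 1 := by
        rw [valAddOne13, Nat.mod_eq_of_lt (by have := l.isLt; omega)]
      have h0 : (l + 1 : Fin n) ≠ 0 := fun h => hln ((addOneEqZero13 l).mp h)
      rw [if_neg h0, mul_one, h1, valSubOne13]
      by_cases hk : k = 0
      · rw [if_pos hk, if_pos hk, if_neg (show ¬ (n - 1 < (l : ℕ)) by
          have := l.isLt; omega), one_mul]
        subst hk
        rw [if_pos (by simp)]
      · have hkv : (k : ℕ) ≠ 0 := fun h => hk (Fin.ext (by simp [h]))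
        rw [if_neg hk, if_neg hk, one_mul]
        exact congrArg₂ _ (if_congr (by omega) rfl rfl) rfl
  -- the kernel
  set W : Submodule K (Fin n → K) := LinearMap.ker M.mulVecLin with hWdef
  have hWmem : ∀ v, v ∈ W ↔ M *ᵥ v = 0 := by
    intro v; rw [hWdef, LinearMap.mem_ker, Matrix.mulVecLin_apply]
  set t : ℕ := Module.finrank K W with htdef
  have ht0 : 0 < t := by
    obtain ⟨v, hv0, hv⟩ := (Matrix.exists_mulVec_eq_zero_iff).mpr hdet
    have : Nontrivial W := ⟨⟨⟨v, (hWmem v).mpr hv⟩, 0, by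
      simp only [ne_eq, Submodule.mk_eq_zero]; exact hv0⟩⟩
    exact Module.finrank_pos
  have htn : t < n := by
    have hne : W ≠ ⊤ := by
      intro htop
      obtain ⟨i, hi⟩ := Function.ne_iff.mp hx
      simp only [Pi.zero_apply] at hi
      have hmem : Pi.single (0 : Fin n) (1 : K) ∈ W := htop ▸ Submodule.mem_top
      rw [hWmem] at hmem
      have h2 := congrFun hmem i
      simp only [Matrix.mulVec, dotProduct, Pi.single_apply, mul_ite, mul_one,
        mul_zero, Finset.sum_ite_eq', Finset.mem_univ, if_true, Pi.zero_apply] at h2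
      rw [hM i 0] at h2
      simp only [Fin.val_zero, Nat.not_lt_zero, if_false, pow_zero, sub_zero,
        AlgEquiv.one_apply, one_mul] at h2
      exact hi h2
    have := Submodule.finrank_lt hne
    rwa [Module.finrank_fin_fun] at this
  obtain b := Module.finBasis K W
  set B : Matrix (Fin n) (Fin t) K := Matrix.of fun k j => ((b j : Fin n → K) k) with hBdef
  have hBv : ∀ v : Fin t → K, B *ᵥ v = ((∑ j, v j • b j : W) : Fin n → K) := by
    intro v
    funext k
    have hcoe := map_sum W.subtype (fun j => v j • b j) Finset.univ
    simp only [_root_.map_smul, Submodule.subtype_apply] at hcoe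
    rw [hcoe, Finset.sum_apply]
    simp only [Matrix.mulVec, dotProduct, hBdef, Matrix.of_apply, Pi.smul_apply,
      smul_eq_mul]
    exact Finset.sum_congr rfl fun j _ => mul_comm _ _
  have hBinj : ∀ v : Fin t → K, B *ᵥ v = 0 → v = 0 := by
    intro v hv
    rw [hBv] at hv
    have h1 : (∑ j, v j • b j : W) = 0 := Subtype.ext hv
    have h2 := Fintype.linearIndependent_iff.mp b.linearIndependent v h1
    funext j; exact h2 j
  have hmapmul : ∀ (τ : K ≃ₐ[F] K) {p q r : ℕ} (X : Matrix (Fin p) (Fin q) K)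
      (Y : Matrix (Fin q) (Fin r) K), (X * Y).map ⇑τ = X.map ⇑τ * Y.map ⇑τ := by
    intro τ p q r X Y
    ext i j
    simp [Matrix.mul_apply, Matrix.map_apply, map_sum]
  have hMB : M * B = 0 := by
    ext k j
    have h1 := (b j).2
    rw [hWmem] at h1
    have h2 := congrFun h1 k
    simp only [Matrix.mulVec, dotProduct, Pi.zero_apply] at h2
    simp only [Matrix.mul_apply, hBdef, Matrix.of_apply, Matrix.zero_apply]
    exact h2
  set N : Matrix (Fin n) (Fin t) K := C * B.map ⇑σ with hNdef
  have hMN : M * N = 0 := by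
    rw [hNdef, ← Matrix.mul_assoc, hMC, Matrix.mul_assoc, ← hmapmul σ, hMB,
      Matrix.map_zero _ (map_zero σ), Matrix.mul_zero]
  have hcol : ∀ j, (fun k => N k j) ∈ W := by
    intro j
    rw [hWmem]
    funext k
    have h2 := congrFun (congrFun hMN k) j
    simp only [Matrix.mul_apply, Matrix.zero_apply] at h2
    simp only [Matrix.mulVec, dotProduct, Pi.zero_apply]
    exact h2
  set P : Matrix (Fin t) (Fin t) K :=
    Matrix.of fun i j => b.repr ⟨fun k => N k j, hcol j⟩ i with hPdef
  have hNBP : N = B * P := by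
    ext k j
    have hrepr := b.sum_repr ⟨fun k => N k j, hcol j⟩
    have hcoe := map_sum W.subtype (fun i => b.repr ⟨fun k => N k j, hcol j⟩ i • b i)
      Finset.univ
    simp only [_root_.map_smul, Submodule.subtype_apply] at hcoe
    have h3 : (∑ i, b.repr ⟨fun k => N k j, hcol j⟩ i • (b i : Fin n → K)) =
        (fun k => N k j) := by
      rw [← hcoe, hrepr]
    have h4 := congrFun h3 k
    simp only [Finset.sum_apply, Pi.smul_apply, smul_eq_mul] at h4
    simp only [Matrix.mul_apply, hBdef, hPdef, Matrix.of_apply]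
    rw [← h4]
    exact Finset.sum_congr rfl fun i _ => mul_comm _ _
  set Pf : ℕ → Matrix (Fin t) (Fin t) K := fun m => P.map ⇑(σ ^ m) with hPfdef
  have hCfix : ∀ m : ℕ, C.map ⇑(σ ^ m) = C := by
    intro m
    ext k l
    simp only [hCdef, cycAux13, Matrix.map_apply, Matrix.of_apply]
    split_ifs <;> simp [hfix]
  have hiter : ∀ m : ℕ, C ^ m * B.map ⇑(σ ^ m) = B * twProdAux13 Pf m := by
    intro m
    induction m with
    | zero =>
      simp only [pow_zero, twProdAux13]
      rw [show ⇑(1 : K ≃ₐ[F] K) = id from rfl, Matrix.map_id, Matrix.one_mul, Matrix.mul_one]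
    | succ m ih =>
      have hcomp : ⇑(σ ^ (m + 1) : K ≃ₐ[F] K) = ⇑(σ ^ m : K ≃ₐ[F] K) ∘ ⇑σ := by
        funext v; rw [pow_succ]; rfl
      calc C ^ (m + 1) * B.map ⇑(σ ^ (m + 1))
          = C ^ m * (C * (B.map ⇑σ).map ⇑(σ ^ m)) := by
            rw [pow_succ, Matrix.mul_assoc, hcomp, ← Matrix.map_map]
        _ = C ^ m * ((C * B.map ⇑σ).map ⇑(σ ^ m)) := by
            rw [hmapmul (σ ^ m), hCfix]
        _ = C ^ m * ((B * P).map ⇑(σ ^ m)) := by rw [← hNdef, hNBP]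
        _ = C ^ m * B.map ⇑(σ ^ m) * Pf m := by
            rw [hmapmul (σ ^ m), Matrix.mul_assoc, hPfdef]
        _ = B * twProdAux13 Pf m * Pf m := by rw [ih]
        _ = B * twProdAux13 Pf (m + 1) := by
            rw [Matrix.mul_assoc]; rfl
  have hfinal : twProdAux13 Pf n = γ' • (1 : Matrix (Fin t) (Fin t) K) := by
    have h1 := hiter n
    rw [show ⇑(σ ^ n : K ≃ₐ[F] K) = id by rw [hσn]; rfl, Matrix.map_id] at h1
    rw [hCdef, cycPowN13] at h1
    have h2 : B * (γ' • (1 : Matrix (Fin t) (Fin t) K)) = B * twProdAux13 Pf n := by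
      rw [Matrix.mul_smul, Matrix.mul_one, ← h1, Matrix.smul_mul, Matrix.one_mul]
    ext i j
    have hcolj : B *ᵥ (fun i => ((γ' • (1 : Matrix (Fin t) (Fin t) K)) i j
        - twProdAux13 Pf n i j)) = 0 := by
      funext k
      have h3 := congrFun (congrFun h2 k) j
      simp only [Matrix.mul_apply] at h3
      simp only [Matrix.mulVec, dotProduct, Pi.zero_apply]
      simp only [mul_sub]
      rw [Finset.sum_sub_distrib, h3, sub_self]
    have h4 := congrFun (hBinj _ hcolj) i
    simp only [Pi.zero_apply, sub_eq_zero] at h4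
    exact h4.symm
  have hdetPf : ∀ m : ℕ, (twProdAux13 Pf m).det = ∏ k ∈ Finset.range m, (σ ^ k) P.det := by
    intro m
    induction m with
    | zero => simp [twProdAux13]
    | succ m ih =>
      rw [show twProdAux13 Pf (m + 1) = twProdAux13 Pf m * Pf m from rfl]
      rw [Matrix.det_mul, ih, Finset.prod_range_succ]
      congr 1
      rw [hPfdef]
      exact ((σ ^ m : K ≃ₐ[F] K).map_det P).symm
  have hprod : ∏ k ∈ Finset.range n, (σ ^ k) P.det = γ' ^ t := by
    rw [← hdetPf, hfinal, Matrix.det_smul, Matrix.det_one, mul_one, Fintype.card_fin]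
  have hz0 : P.det ≠ 0 := by
    intro h0
    rw [h0] at hprod
    have h1 : (0 : K) = γ' ^ t := by
      rw [← hprod]
      exact (Finset.prod_eq_zero (Finset.mem_range.mpr hn) (by simp)).symm
    exact hγ'0 (pow_eq_zero_iff ht0.ne' |>.mp h1.symm)
  have horder : orderOf σ = n := by
    rw [← Nat.card_zpowers, (Subgroup.zpowers σ).eq_top_iff'.mpr hgen, Subgroup.card_top,
      Nat.card_eq_fintype_card, hcard]
  have hbij : Function.Bijective (fun k : Fin n => σ ^ (k : ℕ)) := by
    rw [Fintype.bijective_iff_injective_and_card]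
    refine ⟨?_, by rw [Fintype.card_fin, hcard]⟩
    intro i j hij
    refine Fin.ext (pow_injOn_Iio_orderOf ?_ ?_ hij)
    · rw [Set.mem_Iio, horder]; exact i.isLt
    · rw [Set.mem_Iio, horder]; exact j.isLt
  have hnormz : algebraMap F K (Algebra.norm F P.det) = γ' ^ t := by
    rw [Algebra.norm_eq_prod_automorphisms]
    rw [← Fintype.prod_bijective _ hbij _ _ (fun k => rfl)]
    rw [Fin.prod_univ_eq_prod_range (fun k => (σ ^ k) P.det) n]
    exact hprod
  have hfin : Algebra.norm F P.det = γ ^ t := by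
    apply (algebraMap F K).injective
    rw [hnormz, hγ'def, map_pow]
  exact hnorm t ht0 htn P.det hz0 hfin
end

section
/- For the Golden code: with θ = (1+√5)/2, θ̄ = (1-√5)/2, α = 1+i-iθ, ᾱ = 1+i-iθ̄, and any a,b,c,d ∈ Z[i] not all zero, the determinant of X = (1/√5)·[[α(a+bθ), α(c+dθ)],[iᾱ(c+dθ̄), ᾱ(a+bθ̄)]] equals (1/(2-i))·[(a²+ab-b²) - i(c²+cd-d²)], and |det X|² ≥ 1/5, with the minimum 1/5 attained. -/
open GaussianInt

def f5 : GaussianInt →+* ZMod 5 where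
  toFun x := (x.re : ZMod 5) + 3 * (x.im : ZMod 5)
  map_one' := by simp
  map_zero' := by simp
  map_add' x y := by push_cast [Zsqrtd.re_add, Zsqrtd.im_add]; ring
  map_mul' x y := by
    have h10 : (10 : ZMod 5) = 0 := by decide
    push_cast [Zsqrtd.re_mul, Zsqrtd.im_mul]
    linear_combination (-((x.im : ZMod 5) * (y.im : ZMod 5))) * h10

lemma gold_f5_pi : f5 ⟨2, 1⟩ = 0 := by decide

lemma gold_f5_pib : f5 ⟨2, -1⟩ = -1 := by decide

lemma gold_f5_i : f5 ⟨0, 1⟩ = 3 := by decide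

lemma gold_pi_dvd_iff (x : GaussianInt) : ((⟨2, 1⟩ : GaussianInt) ∣ x) ↔ f5 x = 0 := by
  constructor
  · rintro ⟨y, rfl⟩
    rw [map_mul, gold_f5_pi, zero_mul]
  · intro h
    have h5 : (5 : ℤ) ∣ x.re + 3 * x.im := by
      have := (ZMod.intCast_zmod_eq_zero_iff_dvd (x.re + 3 * x.im) 5).mp (by push_cast; exact h)
      exact_mod_cast this
    obtain ⟨k, hk⟩ := h5
    refine ⟨⟨2 * k - x.im, x.im - k⟩, ?_⟩
    have h1 : x.re = 5 * k - 3 * x.im := by omega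
    ext <;> simp [Zsqrtd.re_mul, Zsqrtd.im_mul] <;> omega

lemma gold_sq3 : ∀ u v : ZMod 5, u ^ 2 = 3 * v ^ 2 → u = 0 ∧ v = 0 := by decide

lemma gold_key_aux : ∀ n : ℕ, ∀ a b c d : GaussianInt,
    a.norm.natAbs + b.norm.natAbs + c.norm.natAbs + d.norm.natAbs ≤ n →
    a ^ 2 + a * b - b ^ 2 = ⟨0, 1⟩ * (c ^ 2 + c * d - d ^ 2) →
    a = 0 ∧ b = 0 ∧ c = 0 ∧ d = 0 := by
  intro n
  induction n with
  | zero =>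
    intro a b c d hle _
    refine ⟨?_, ?_, ?_, ?_⟩ <;>
    · rw [← norm_eq_zero, ← Int.natAbs_eq_zero]; omega
  | succ n ih =>
    intro a b c d hle h
    have h50 : (5 : ZMod 5) = 0 := by decide
    have hπ : (⟨2, 1⟩ : GaussianInt) ≠ 0 := by
      intro hc; exact absurd (congrArg Zsqrtd.re hc) (by decide)
    -- step 1: mod (2+i)
    have h0 : f5 a ^ 2 + f5 a * f5 b - f5 b ^ 2 = 3 * (f5 c ^ 2 + f5 c * f5 d - f5 d ^ 2) := by
      have := congrArg f5 h
      simpa only [map_add, map_sub, map_mul, map_pow, gold_f5_i] using this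
    have hsq1 : (f5 a + 3 * f5 b) ^ 2 = 3 * (f5 c + 3 * f5 d) ^ 2 := by
      linear_combination h0 + (f5 a * f5 b + 2 * f5 b ^ 2 - 3 * (f5 c * f5 d + 2 * f5 d ^ 2)) * h50
    obtain ⟨hab, hcd⟩ := gold_sq3 _ _ hsq1
    have hdab : (⟨2, 1⟩ : GaussianInt) ∣ a + 3 * b := by
      rw [gold_pi_dvd_iff, map_add, map_mul, map_ofNat]; exact hab
    have hdcd : (⟨2, 1⟩ : GaussianInt) ∣ c + 3 * d := by
      rw [gold_pi_dvd_iff, map_add, map_mul, map_ofNat]; exact hcd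
    obtain ⟨k, hk⟩ := hdab
    obtain ⟨m, hm⟩ := hdcd
    have ha : a = ⟨2, 1⟩ * k - 3 * b := by linear_combination hk
    have hc : c = ⟨2, 1⟩ * m - 3 * d := by linear_combination hm
    have h5' : (5 : GaussianInt) = ⟨2, 1⟩ * ⟨2, -1⟩ := by decide
    -- step 2: divide by (2+i) and go mod (2+i) again
    have hE : (⟨2, 1⟩ : GaussianInt) * (⟨2, 1⟩ * k ^ 2 - 5 * (k * b) + ⟨2, -1⟩ * b ^ 2)
        = ⟨2, 1⟩ * (⟨0, 1⟩ * (⟨2, 1⟩ * m ^ 2 - 5 * (m * d) + ⟨2, -1⟩ * d ^ 2)) := by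
      rw [ha, hc] at h
      linear_combination h + (-(b ^ 2) + ⟨0, 1⟩ * d ^ 2) * h5'
    have hE2 := mul_left_cancel₀ hπ hE
    have h1 : f5 b ^ 2 = 3 * f5 d ^ 2 := by
      have := congrArg f5 hE2
      simp only [map_add, map_sub, map_mul, map_pow, map_ofNat, gold_f5_i, gold_f5_pi,
        gold_f5_pib] at this
      linear_combination (-1 : ZMod 5) * this - (f5 k * f5 b - 3 * (f5 m * f5 d)) * h50
    obtain ⟨hb0, hd0⟩ := gold_sq3 _ _ h1
    have hdb : (⟨2, 1⟩ : GaussianInt) ∣ b := (gold_pi_dvd_iff b).mpr hb0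
    have hdd : (⟨2, 1⟩ : GaussianInt) ∣ d := (gold_pi_dvd_iff d).mpr hd0
    have hda : (⟨2, 1⟩ : GaussianInt) ∣ a := by
      rw [ha]; exact dvd_sub (dvd_mul_right _ _) (hdb.mul_left 3)
    have hdc : (⟨2, 1⟩ : GaussianInt) ∣ c := by
      rw [hc]; exact dvd_sub (dvd_mul_right _ _) (hdd.mul_left 3)
    obtain ⟨a₁, ha₁⟩ := hda
    obtain ⟨b₁, hb₁⟩ := hdb
    obtain ⟨c₁, hc₁⟩ := hdc
    obtain ⟨d₁, hd₁⟩ := hdd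
    have hnorm : ∀ x y : GaussianInt, x = ⟨2, 1⟩ * y → x.norm.natAbs = 5 * y.norm.natAbs := by
      intro x y hxy
      rw [hxy, Zsqrtd.norm_mul, Int.natAbs_mul]
      norm_num [Zsqrtd.norm]
    have hna := hnorm a a₁ ha₁
    have hnb := hnorm b b₁ hb₁
    have hnc := hnorm c c₁ hc₁
    have hnd := hnorm d d₁ hd₁
    have heq : a₁ ^ 2 + a₁ * b₁ - b₁ ^ 2 = ⟨0, 1⟩ * (c₁ ^ 2 + c₁ * d₁ - d₁ ^ 2) := by
      apply mul_left_cancel₀ (pow_ne_zero 2 hπ)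
      rw [ha₁, hb₁, hc₁, hd₁] at h
      linear_combination h
    obtain ⟨e1, e2, e3, e4⟩ := ih a₁ b₁ c₁ d₁ (by omega) heq
    refine ⟨?_, ?_, ?_, ?_⟩ <;> simp [ha₁, hb₁, hc₁, hd₁, e1, e2, e3, e4]

lemma gold_key (a b c d : GaussianInt)
    (h : a ^ 2 + a * b - b ^ 2 = ⟨0, 1⟩ * (c ^ 2 + c * d - d ^ 2)) :
    a = 0 ∧ b = 0 ∧ c = 0 ∧ d = 0 :=
  gold_key_aux _ a b c d le_rfl h


open Complex in
theorem stmt_14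
    (θ θb α αb : ℂ)
    (hθ : θ = (1 + Real.sqrt 5) / 2) (hθb : θb = (1 - Real.sqrt 5) / 2)
    (hα : α = 1 + I - I * θ) (hαb : αb = 1 + I - I * θb)
    (Xm : GaussianInt → GaussianInt → GaussianInt → GaussianInt →
      Matrix (Fin 2) (Fin 2) ℂ)
    (hXm : ∀ a b c d : GaussianInt, Xm a b c d =
      (1 / (Real.sqrt 5 : ℂ)) •
        !![α * (GaussianInt.toComplex a + GaussianInt.toComplex b * θ),
           α * (GaussianInt.toComplex c + GaussianInt.toComplex d * θ);
           I * αb * (GaussianInt.toComplex c + GaussianInt.toComplex d * θb),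
           αb * (GaussianInt.toComplex a + GaussianInt.toComplex b * θb)]) :
    (∀ a b c d : GaussianInt, ¬(a = 0 ∧ b = 0 ∧ c = 0 ∧ d = 0) →
      (Xm a b c d).det =
        (1 / (2 - I)) *
          (GaussianInt.toComplex (a ^ 2 + a * b - b ^ 2)
            - I * GaussianInt.toComplex (c ^ 2 + c * d - d ^ 2)) ∧
      1 / 5 ≤ Complex.normSq (Xm a b c d).det) ∧
    ∃ a b c d : GaussianInt, ¬(a = 0 ∧ b = 0 ∧ c = 0 ∧ d = 0) ∧
      Complex.normSq (Xm a b c d).det = 1 / 5 := by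
  have hs0 : (Real.sqrt 5 : ℂ) ≠ 0 := by
    simp only [ne_eq, Complex.ofReal_eq_zero]
    positivity
  have hs2 : (Real.sqrt 5 : ℂ) ^ 2 = 5 := by
    rw [← Complex.ofReal_pow, Real.sq_sqrt (by norm_num : (0:ℝ) ≤ 5)]
    norm_num
  have hsum : θ + θb = 1 := by rw [hθ, hθb]; ring
  have hprod : θ * θb = -1 := by
    rw [hθ, hθb]; linear_combination (-(1:ℂ)/4) * hs2
  have hαα : α * αb = 2 + I := by
    rw [hα, hαb]
    linear_combination ((1 - θ) * (1 - θb)) * Complex.I_sq + (1 - I) * hsum + (-1 : ℂ) * hprod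
  have h2I : (2 - I : ℂ) ≠ 0 := by
    intro hc
    have := congrArg Complex.im hc
    simp at this
  have hNa : ∀ A B : ℂ, α * (A + B * θ) * (αb * (A + B * θb))
      = (2 + I) * (A ^ 2 + A * B - B ^ 2) := by
    intro A B
    linear_combination (A ^ 2 + A * B * (θ + θb) + B ^ 2 * (θ * θb)) * hαα
      + (2 + I) * A * B * hsum + (2 + I) * B ^ 2 * hprod
  -- determinant formula
  have hdet : ∀ a b c d : GaussianInt, (Xm a b c d).det =
      (1 / (2 - I)) * (GaussianInt.toComplex (a ^ 2 + a * b - b ^ 2)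
        - I * GaussianInt.toComplex (c ^ 2 + c * d - d ^ 2)) := by
    intro a b c d
    have e1 := hNa (toComplex a) (toComplex b)
    have e2 := hNa (toComplex c) (toComplex d)
    rw [hXm, Matrix.det_fin_two]
    simp only [Matrix.smul_apply, Matrix.cons_val', Matrix.cons_val_zero, Matrix.cons_val_one,
      Matrix.head_cons, Matrix.head_fin_const, Matrix.empty_val', Matrix.cons_val_fin_one,
      Matrix.of_apply, smul_eq_mul, map_sub, map_add, map_mul, map_pow]
    field_simp
    linear_combination (-(toComplex a ^ 2 + toComplex a * toComplex b - toComplex b ^ 2)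
        + I * (toComplex c ^ 2 + toComplex c * toComplex d - toComplex d ^ 2)) * hs2
      + (2 - I) * e1 + (I - 2) * I * e2
      + ((toComplex c ^ 2 + toComplex c * toComplex d - toComplex d ^ 2) * I
        - (toComplex a ^ 2 + toComplex a * toComplex b - toComplex b ^ 2)) * Complex.I_sq
  have htoc : toComplex (⟨0, 1⟩ : GaussianInt) = I := by
    simp [toComplex_def]
  have hn5 : Complex.normSq (1 / (2 - I)) = 1 / 5 := by
    rw [one_div, Complex.normSq_inv]
    norm_num [Complex.normSq_apply]
  have hnormsq : ∀ a b c d : GaussianInt, Complex.normSq (Xm a b c d).det =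
      1 / 5 * (((a ^ 2 + a * b - b ^ 2 - (⟨0, 1⟩ : GaussianInt) * (c ^ 2 + c * d - d ^ 2)).norm : ℝ)) := by
    intro a b c d
    rw [hdet a b c d, Complex.normSq_mul, hn5]
    congr 1
    rw [intCast_real_norm]
    conv_rhs => rw [map_sub toComplex, map_mul toComplex, htoc]
  constructor
  · intro a b c d hne
    refine ⟨hdet a b c d, ?_⟩
    have hw0 : a ^ 2 + a * b - b ^ 2 - (⟨0, 1⟩ : GaussianInt) * (c ^ 2 + c * d - d ^ 2) ≠ 0 := by
      intro hc
      exact hne (gold_key a b c d (by linear_combination hc))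
    have h1 : 0 < (a ^ 2 + a * b - b ^ 2 - (⟨0, 1⟩ : GaussianInt) * (c ^ 2 + c * d - d ^ 2)).norm :=
      norm_pos.mpr hw0
    have h2 : (1 : ℝ) ≤ ((a ^ 2 + a * b - b ^ 2 - (⟨0, 1⟩ : GaussianInt) * (c ^ 2 + c * d - d ^ 2)).norm : ℝ) := by
      exact_mod_cast h1
    rw [hnormsq a b c d]
    linarith
  · refine ⟨1, 0, 0, 0, by simp, ?_⟩
    rw [hnormsq 1 0 0 0]
    norm_num
end
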